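/- (Proposition 9) Let Σ be a finite 2-dimensional simplicial complex with β_2(Σ) = 0 such that the space Z_1(Σ^{(−1)}) of Z_2 1-cycles of the 1-skeleton Σ^{(−1)} admits a 2-complete basis (by Theorem 2 of the paper, this holds whenever Σ is PL embeddable into ℝ^{2}). Then 3·f_2(Σ) ≤ 2·f_1(Σ) − 3, and moreover f_2(Σ) ≤ 2·n − 5, where n is the number of vertices of Σ. -/

import Mathlib

open Finset

/-- A finite simplicial complex on a finite vertex type `V`:
a finite nonempty collection of nonempty finite sets (faces)
closed under taking nonempty subsets. -/
structure SComplex (V : Type) [DecidableEq V] [Fintype V] where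
  faces : Finset (Finset V)
  nonempty : faces.Nonempty
  no_empty : ∀ σ ∈ faces, σ ≠ ∅
  down_closed : ∀ σ ∈ faces, ∀ τ, τ ⊆ σ → τ ≠ ∅ → τ ∈ faces

namespace SComplex

variable {V : Type} [DecidableEq V] [Fintype V]

/-- The set of faces of dimension `i` (i.e. of cardinality `i+1`). -/
def facesDim (K : SComplex V) (i : ℕ) : Finset (Finset V) :=
  K.faces.filter (fun σ => σ.card = i + 1)

/-- `fnum K i` is the face number `f_i`. -/
def fnum (K : SComplex V) (i : ℕ) : ℕ := (K.facesDim i).card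

/-- The space of `Z_2` `i`-chains: functions from the `i`-faces to `Z_2`. -/
abbrev Chains (K : SComplex V) (i : ℕ) : Type := {σ // σ ∈ K.facesDim i} → ZMod 2

/-- The boundary map `∂_i : C_i → C_{i-1}` (and `∂_0 = 0`): the value of `∂ c` on an
`(i-1)`-face `τ` is the sum over `i`-faces `σ ⊇ τ` of `c σ`. -/
def boundary (K : SComplex V) (i : ℕ) : Chains K i →ₗ[ZMod 2] Chains K (i - 1) :=
  if i = 0 then 0 else
  { toFun := fun c τ =>
      ∑ σ : {σ // σ ∈ K.facesDim i}, if (τ : Finset V) ⊆ (σ : Finset V) then c σ else 0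
    map_add' := by
      intro c d
      funext τ
      show (∑ σ : {σ // σ ∈ K.facesDim i}, _) = _
      rw [Pi.add_apply, ← Finset.sum_add_distrib]
      apply Finset.sum_congr rfl
      intro σ _
      by_cases h : (τ : Finset V) ⊆ (σ : Finset V) <;> simp [h]
    map_smul' := by
      intro a c
      funext τ
      show (∑ σ : {σ // σ ∈ K.facesDim i}, _) = _
      rw [RingHom.id_apply, Pi.smul_apply, smul_eq_mul, Finset.mul_sum]
      apply Finset.sum_congr rfl
      intro σ _
      by_cases h : (τ : Finset V) ⊆ (σ : Finset V) <;> simp [h] }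

/-- The `i`-th `Z_2` Betti number: `dim ker ∂_i − rank ∂_{i+1}`. -/
noncomputable def betti (K : SComplex V) (i : ℕ) : ℕ :=
  Module.finrank (ZMod 2) (LinearMap.ker (K.boundary i)) -
    Module.finrank (ZMod 2) (LinearMap.range (K.boundary (i + 1)))

/-- The number of `i`-faces in the support of a chain. -/
def suppCard {K : SComplex V} {i : ℕ} (c : Chains K i) : ℕ :=
  (Finset.univ.filter (fun σ => c σ ≠ 0)).card

/-- The girth: the minimal support size of a nonzero `d`-cycle. -/
noncomputable def girth (K : SComplex V) (d : ℕ) : ℕ :=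
  sInf {n | ∃ c : Chains K d, c ∈ LinearMap.ker (K.boundary d) ∧ c ≠ 0 ∧ suppCard c = n}

/-- `Z_d(K)` admits an `m`-complete basis: a basis of the space of `d`-cycles such that every
`d`-face lies in the support of at most `m` basis elements. -/
def HasCompleteBasis (K : SComplex V) (d m : ℕ) : Prop :=
  ∃ (ι : Type) (_ : Fintype ι) (b : Module.Basis ι (ZMod 2) (LinearMap.ker (K.boundary d))),
    ∀ σ : {σ // σ ∈ K.facesDim d},
      (Finset.univ.filter (fun i : ι => (b i).1 σ ≠ 0)).card ≤ m

/-- `K` is `d`-dimensional: `d` is the maximal dimension of a face. -/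
def IsDim (K : SComplex V) (d : ℕ) : Prop :=
  (∀ σ ∈ K.faces, σ.card ≤ d + 1) ∧ ∃ σ ∈ K.faces, σ.card = d + 1

/-- `K` is pure `d`-dimensional: every face is contained in a `d`-face. -/
def IsPure (K : SComplex V) (d : ℕ) : Prop :=
  ∀ σ ∈ K.faces, ∃ τ ∈ K.faces, σ ⊆ τ ∧ τ.card = d + 1

/-- A `d`-dimensional complex is balanced if its vertices can be colored with `d+1` colors
so that the coloring is injective on every face. -/
def IsBalanced (K : SComplex V) (d : ℕ) : Prop :=
  ∃ coloring : V → Fin (d + 1), ∀ σ ∈ K.faces, Set.InjOn coloring (σ : Set V)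

/-- The `d`-skeleton of `K`: all faces of dimension at most `d`. -/
def skeleton (K : SComplex V) (d : ℕ) : SComplex V where
  faces := K.faces.filter (fun σ => σ.card ≤ d + 1)
  nonempty := by
    obtain ⟨σ, hσ⟩ := K.nonempty
    obtain ⟨v, hv⟩ := Finset.nonempty_iff_ne_empty.mpr (K.no_empty σ hσ)
    refine ⟨{v}, Finset.mem_filter.mpr ⟨K.down_closed σ hσ {v}
      (Finset.singleton_subset_iff.mpr hv) (Finset.singleton_ne_empty v), by simp⟩⟩
  no_empty := by
    intro σ hσ
    exact K.no_empty σ (Finset.mem_filter.mp hσ).1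
  down_closed := by
    intro σ hσ τ hτσ hτ
    rw [Finset.mem_filter] at hσ ⊢
    exact ⟨K.down_closed σ hσ.1 τ hτσ hτ, le_trans (Finset.card_le_card hτσ) hσ.2⟩

end SComplex

/-!
Since `β₂ = 0` and there are no 3-faces, `∂₂` embeds the 2-chains into the cycle space `Z₁` of
the 1-skeleton, so `f₂ ≤ z := dim Z₁`. A nonzero 1-cycle of a graph has at least three edges.
The sum `s` of the `z` elements of a 2-complete basis is a nonzero cycle, and an edge in the
support of `s` lies in an odd number, hence exactly one, of the basis supports; counting
incidences gives `3z + 3 ≤ 2 f₁`. Boundaries have zero augmentation, so `rank ∂₁ ≤ f₀ - 1` and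
`f₁ ≤ z + f₀ - 1`. Hence `3 f₂ ≤ 3z ≤ 2 f₁ - 3` and `f₂ ≤ z ≤ 2 f₀ - 5`.
-/

lemma sum_zmod_two_eq_card_ne_zero {ι : Type*} (s : Finset ι) (f : ι → ZMod 2) :
    ∑ i ∈ s, f i = #{i ∈ s | f i ≠ 0} := by
  rw [← sum_filter_ne_zero, card_eq_sum_ones, Nat.cast_sum, Nat.cast_one]
  exact sum_congr rfl fun i hi =>
    (by decide : ∀ x : ZMod 2, x ≠ 0 → x = 1) _ (mem_filter.mp hi).2

theorem mul_card_add_le_two_mul_card_of_two_complete {E ι : Type*} [Fintype E] [Fintype ι]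
    [Nonempty ι] {Z : Submodule (ZMod 2) (E → ZMod 2)} (b : Module.Basis ι (ZMod 2) Z)
    (hb : ∀ e, #{i | (b i : E → ZMod 2) e ≠ 0} ≤ 2) {g : ℕ}
    (hg : ∀ z ∈ Z, z ≠ 0 → g ≤ #{e | z e ≠ 0}) :
    g * Fintype.card ι + g ≤ 2 * Fintype.card E := by
  set s : E → ZMod 2 := ∑ i, (b i : E → ZMod 2) with hs
  have hs_ne : s ≠ 0 := by
    intro h
    obtain ⟨i⟩ := ‹Nonempty ι›
    have := Fintype.linearIndependent_iff.mp b.linearIndependent (fun _ => 1)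
      (Subtype.ext (by simpa [Submodule.coe_sum] using h)) i
    exact one_ne_zero this
  have hs_supp : g ≤ #{e | s e ≠ 0} := hg s (Z.sum_mem fun i _ => (b i).2) hs_ne
  have hbasis_supp : g * Fintype.card ι ≤ ∑ i, #{e | (b i : E → ZMod 2) e ≠ 0} := by
    rw [mul_comm, ← smul_eq_mul, ← card_univ, ← sum_const]
    exact sum_le_sum fun i _ => hg _ (b i).2 (by simpa using b.ne_zero i)
  have hedge : ∀ e, #{i | (b i : E → ZMod 2) e ≠ 0} + (if s e ≠ 0 then 1 else 0) ≤ 2 := by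
    intro e
    have hse : s e = #{i | (b i : E → ZMod 2) e ≠ 0} := by
      rw [hs, Finset.sum_apply, sum_zmod_two_eq_card_ne_zero]
    have := hb e
    split_ifs with h
    · rw [hse, Ne, ZMod.natCast_eq_zero_iff_even, Nat.not_even_iff_odd] at h
      obtain ⟨k, hk⟩ := h
      omega
    · omega
  calc g * Fintype.card ι + g
      ≤ ∑ i, #{e | (b i : E → ZMod 2) e ≠ 0} + #{e | s e ≠ 0} := add_le_add hbasis_supp hs_supp
    _ = ∑ e, (#{i | (b i : E → ZMod 2) e ≠ 0} + if s e ≠ 0 then 1 else 0) := by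
        simp only [card_filter, sum_add_distrib]
        rw [sum_comm]
    _ ≤ ∑ _e : E, 2 := sum_le_sum fun e _ => hedge e
    _ = 2 * Fintype.card E := by simp [mul_comm]

namespace SComplex

variable {V : Type} [DecidableEq V] [Fintype V]

lemma mem_facesDim {K : SComplex V} {i : ℕ} {σ : Finset V} :
    σ ∈ K.facesDim i ↔ σ ∈ K.faces ∧ σ.card = i + 1 :=
  mem_filter

lemma boundary_apply (K : SComplex V) {i : ℕ} (hi : i ≠ 0) (c : Chains K i)
    (τ : {τ // τ ∈ K.facesDim (i - 1)}) :
    K.boundary i c τ = ∑ σ : {σ // σ ∈ K.facesDim i}, if τ.1 ⊆ σ.1 then c σ else 0 := by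
  simp only [boundary, if_neg hi]
  rfl

lemma singleton_mem_facesDim_zero {K : SComplex V} {σ : Finset V} (hσ : σ ∈ K.faces) {v : V}
    (hv : v ∈ σ) : {v} ∈ K.facesDim 0 :=
  mem_facesDim.mpr
    ⟨K.down_closed σ hσ {v} (singleton_subset_iff.mpr hv) (singleton_ne_empty v), card_singleton v⟩

lemma facesDim_zero_nonempty (K : SComplex V) : (K.facesDim 0).Nonempty := by
  obtain ⟨σ, hσ⟩ := K.nonempty
  obtain ⟨v, hv⟩ := nonempty_iff_ne_empty.mpr (K.no_empty σ hσ)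
  exact ⟨{v}, singleton_mem_facesDim_zero hσ hv⟩

lemma finrank_chains (K : SComplex V) (i : ℕ) :
    Module.finrank (ZMod 2) (Chains K i) = K.fnum i := by
  simp [fnum]

lemma fnum_pos {K : SComplex V} {d : ℕ} (h : K.IsDim d) : 0 < K.fnum d := by
  obtain ⟨σ, hσ, hcard⟩ := h.2
  exact card_pos.mpr ⟨σ, mem_facesDim.mpr ⟨hσ, hcard⟩⟩

lemma fnum_eq_zero_of_lt {K : SComplex V} {d i : ℕ} (h : K.IsDim d) (hi : d < i) :
    K.fnum i = 0 :=
  card_eq_zero.mpr <| filter_eq_empty_iff.mpr fun σ hσ hcard => by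
    have := h.1 σ hσ
    omega

lemma card_facesDim_between (K : SComplex V) {τ σ : Finset V} (hσ : σ ∈ K.faces)
    (hτσ : τ ⊆ σ) {k : ℕ} (hk : τ.card ≤ k + 1) :
    #{e ∈ K.facesDim k | τ ⊆ e ∧ e ⊆ σ} = (σ.card - τ.card).choose (k + 1 - τ.card) := by
  rw [← card_sdiff_of_subset hτσ, ← card_powersetCard]
  refine card_nbij' (· \ τ) (· ∪ τ) ?_ ?_ ?_ ?_
  · intro e he
    obtain ⟨he, hτe, heσ⟩ := mem_filter.mp he
    obtain ⟨-, he_card⟩ := mem_facesDim.mp he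
    rw [mem_coe, mem_powersetCard, card_sdiff_of_subset hτe, he_card]
    exact ⟨sdiff_subset_sdiff heσ le_rfl, rfl⟩
  · intro w hw
    obtain ⟨hwστ, hw_card⟩ := mem_powersetCard.mp hw
    obtain ⟨hwσ, hwτ⟩ := subset_sdiff.mp hwστ
    have hsub : w ∪ τ ⊆ σ := union_subset hwσ hτσ
    have hcard : (w ∪ τ).card = k + 1 := by rw [card_union_of_disjoint hwτ, hw_card]; omega
    have hne : w ∪ τ ≠ ∅ := nonempty_iff_ne_empty.mp (card_pos.mp (by omega))
    exact mem_filter.mpr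
      ⟨mem_facesDim.mpr ⟨K.down_closed σ hσ _ hsub hne, hcard⟩, subset_union_right, hsub⟩
  · intro e he
    exact sdiff_union_of_subset (mem_filter.mp he).2.1
  · intro w hw
    exact (union_sdiff_right w τ).trans
      (sdiff_eq_self_of_disjoint (subset_sdiff.mp (mem_powersetCard.mp hw).1).2)

/-- Each `(k+1)`-face `σ ⊇ ρ` is counted once for each of the two `k`-faces between `ρ` and `σ`.
For `ρ` a `(k-1)`-face this is `∂ ∂ = 0`; for `ρ = ∅` it says that boundaries of 1-chains have
zero augmentation. -/
lemma sum_incidence_eq_zero (K : SComplex V) {ρ : Finset V} {k : ℕ} (hρ : ρ.card = k)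
    (g : {σ // σ ∈ K.facesDim (k + 1)} → ZMod 2) :
    ∑ e : {e // e ∈ K.facesDim k},
      (if ρ ⊆ e.1 then ∑ σ : {σ // σ ∈ K.facesDim (k + 1)}, if e.1 ⊆ σ.1 then g σ else 0
        else 0) = 0 := by
  calc _ = ∑ e : {e // e ∈ K.facesDim k}, ∑ σ : {σ // σ ∈ K.facesDim (k + 1)},
        if ρ ⊆ e.1 ∧ e.1 ⊆ σ.1 then g σ else 0 := by
          refine sum_congr rfl fun e _ => ?_
          split_ifs with h <;> simp [h]
    _ = ∑ σ : {σ // σ ∈ K.facesDim (k + 1)}, #{e ∈ K.facesDim k | ρ ⊆ e ∧ e ⊆ σ.1} • g σ := by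
          rw [sum_comm]
          refine sum_congr rfl fun σ _ => ?_
          rw [sum_coe_sort (K.facesDim k) fun e => if ρ ⊆ e ∧ e ⊆ σ.1 then g σ else 0,
            ← sum_filter, sum_const]
    _ = 0 := sum_eq_zero fun σ _ => by
          obtain ⟨hσ, hcard⟩ := mem_facesDim.mp σ.2
          by_cases hρσ : ρ ⊆ σ.1
          · rw [card_facesDim_between K hσ hρσ (by omega), hcard, hρ, nsmul_eq_mul,
              show k + 1 + 1 - k = 2 by omega, show k + 1 - k = 1 by omega,
              show ((Nat.choose 2 1 : ℕ) : ZMod 2) = 0 by decide, zero_mul]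
          · rw [filter_false_of_mem fun e _ h => hρσ (h.1.trans h.2), card_empty, zero_smul]

theorem boundary_boundary (K : SComplex V) (i : ℕ) (c : Chains K (i + 2)) :
    K.boundary (i + 1) (K.boundary (i + 2) c) = 0 := by
  funext τ
  rw [boundary_apply K i.succ_ne_zero]
  simp only [boundary_apply K (i + 1).succ_ne_zero]
  exact sum_incidence_eq_zero K (mem_facesDim.mp τ.2).2 c

def augmentation (K : SComplex V) : Chains K 0 →ₗ[ZMod 2] ZMod 2 :=
  ∑ τ, LinearMap.proj τ

theorem augmentation_boundary (K : SComplex V) (c : Chains K 1) :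
    K.augmentation (K.boundary 1 c) = 0 := by
  simp only [augmentation, LinearMap.coe_sum, LinearMap.coe_proj, Finset.sum_apply,
    Function.eval]
  convert sum_incidence_eq_zero K (card_empty (α := V)) c using 2 with τ
  rw [if_pos (empty_subset _)]
  exact boundary_apply K one_ne_zero c τ

lemma finrank_range_boundary_one_lt (K : SComplex V) :
    Module.finrank (ZMod 2) (LinearMap.range (K.boundary 1)) < K.fnum 0 := by
  have hle : LinearMap.range (K.boundary 1) ≤ LinearMap.ker K.augmentation := by
    rintro _ ⟨c, rfl⟩
    exact augmentation_boundary K c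
  have hne : LinearMap.ker K.augmentation ≠ ⊤ := by
    rw [Ne, LinearMap.ker_eq_top]
    intro h
    obtain ⟨τ, hτ⟩ := K.facesDim_zero_nonempty
    simpa [augmentation] using LinearMap.congr_fun h (Pi.single ⟨τ, hτ⟩ 1)
  rw [← finrank_chains]
  exact Submodule.finrank_lt (hle.trans_lt (lt_top_iff_ne_top.mpr hne)).ne

lemma ker_boundary_eq_bot {K : SComplex V} {d : ℕ} (h : K.IsDim d) (hβ : K.betti d = 0) :
    LinearMap.ker (K.boundary d) = ⊥ := by
  have hrange := LinearMap.finrank_range_le (K.boundary (d + 1))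
  rw [finrank_chains, fnum_eq_zero_of_lt h (lt_add_one d)] at hrange
  rw [betti] at hβ
  exact Submodule.finrank_eq_zero.mp (by omega)

lemma fnum_le_finrank_ker_boundary {K : SComplex V} {i : ℕ}
    (h : LinearMap.ker (K.boundary (i + 2)) = ⊥) :
    K.fnum (i + 2) ≤ Module.finrank (ZMod 2) (LinearMap.ker (K.boundary (i + 1))) := by
  have hle : LinearMap.range (K.boundary (i + 2)) ≤ LinearMap.ker (K.boundary (i + 1)) := by
    rintro _ ⟨c, rfl⟩
    exact boundary_boundary K i c
  rw [← finrank_chains, ← LinearMap.finrank_range_of_inj (LinearMap.ker_eq_bot.mp h)]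
  exact Submodule.finrank_mono hle

lemma fnum_one_lt_finrank_ker_add (K : SComplex V) :
    K.fnum 1 < Module.finrank (ZMod 2) (LinearMap.ker (K.boundary 1)) + K.fnum 0 := by
  have := (K.boundary 1).finrank_range_add_finrank_ker
  rw [finrank_chains] at this
  have := K.finrank_range_boundary_one_lt
  omega

lemma even_card_support_containing {K : SComplex V} {c : Chains K 1}
    (hc : c ∈ LinearMap.ker (K.boundary 1)) {v : V} (hv : {v} ∈ K.facesDim 0) :
    Even #{e | c e ≠ 0 ∧ v ∈ e.1} := by
  have h := congr_fun (LinearMap.mem_ker.mp hc) ⟨{v}, hv⟩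
  rw [boundary_apply K one_ne_zero, ← sum_filter, sum_zmod_two_eq_card_ne_zero,
    filter_filter] at h
  simpa only [singleton_subset_iff, and_comm] using (ZMod.natCast_eq_zero_iff_even).mp h

lemma exists_ne_mem_support_containing {K : SComplex V} {c : Chains K 1}
    (hc : c ∈ LinearMap.ker (K.boundary 1)) {e : {e // e ∈ K.facesDim 1}} (he : c e ≠ 0)
    {v : V} (hv : v ∈ e.1) : ∃ e', c e' ≠ 0 ∧ v ∈ e'.1 ∧ e' ≠ e := by
  have heven := even_card_support_containing hc
    (singleton_mem_facesDim_zero (mem_facesDim.mp e.2).1 hv)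
  have hpos : 0 < #{e | c e ≠ 0 ∧ v ∈ e.1} := card_pos.mpr ⟨e, by simp [he, hv]⟩
  obtain ⟨e', he', hne⟩ :=
    exists_mem_ne (show 1 < #{e | c e ≠ 0 ∧ v ∈ e.1} by obtain ⟨k, hk⟩ := heven; omega) e
  simp only [mem_filter, mem_univ, true_and] at he'
  exact ⟨e', he'.1, he'.2, hne⟩

theorem three_le_card_support {K : SComplex V} {c : Chains K 1}
    (hc : c ∈ LinearMap.ker (K.boundary 1)) (hne : c ≠ 0) : 3 ≤ #{e | c e ≠ 0} := by
  obtain ⟨e₀, he₀⟩ : ∃ e, c e ≠ 0 := Function.ne_iff.mp hne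
  obtain ⟨u, w, huw, he₀_eq⟩ := card_eq_two.mp (mem_facesDim.mp e₀.2).2
  obtain ⟨e₁, he₁, hu₁, h10⟩ :=
    exists_ne_mem_support_containing hc he₀ (v := u) (by simp [he₀_eq])
  obtain ⟨e₂, he₂, hw₂, h20⟩ :=
    exists_ne_mem_support_containing hc he₀ (v := w) (by simp [he₀_eq])
  have h12 : e₁ ≠ e₂ := by
    rintro rfl
    refine h10 (Subtype.ext (eq_of_subset_of_card_le ?_ ?_)).symm
    · rw [he₀_eq]
      exact insert_subset hu₁ (singleton_subset_iff.mpr hw₂)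
    · rw [(mem_facesDim.mp e₀.2).2, (mem_facesDim.mp e₁.2).2]
  calc 3 = #{e₀, e₁, e₂} := by
        rw [card_insert_of_notMem (by simp [h10.symm, h20.symm]), card_pair h12]
    _ ≤ #{e | c e ≠ 0} := card_le_card (by simp [insert_subset_iff, he₀, he₁, he₂])

lemma facesDim_skeleton (K : SComplex V) {d i : ℕ} (hi : i ≤ d) :
    (K.skeleton d).facesDim i = K.facesDim i := by
  ext σ
  simp only [facesDim, skeleton, mem_filter]
  constructor
  · rintro ⟨⟨hσ, -⟩, hcard⟩
    exact ⟨hσ, hcard⟩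
  · rintro ⟨hσ, hcard⟩
    exact ⟨⟨hσ, by omega⟩, hcard⟩

lemma fnum_skeleton (K : SComplex V) {d i : ℕ} (hi : i ≤ d) :
    (K.skeleton d).fnum i = K.fnum i :=
  congrArg card (K.facesDim_skeleton hi)

def skeletonFacesEquiv (K : SComplex V) {d i : ℕ} (hi : i ≤ d) :
    {σ // σ ∈ (K.skeleton d).facesDim i} ≃ {σ // σ ∈ K.facesDim i} :=
  Equiv.subtypeEquivRight fun σ => by rw [K.facesDim_skeleton hi]

lemma boundary_skeleton_comp (K : SComplex V) {d i : ℕ} (hi : i ≤ d) (c : Chains K i) :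
    (K.skeleton d).boundary i (c ∘ K.skeletonFacesEquiv hi) =
      K.boundary i c ∘ K.skeletonFacesEquiv (i.sub_le 1 |>.trans hi) := by
  rcases Nat.eq_zero_or_pos i with rfl | hpos
  · simp [boundary]
  funext τ
  rw [boundary_apply _ hpos.ne', Function.comp_apply, boundary_apply K hpos.ne']
  exact Fintype.sum_equiv (K.skeletonFacesEquiv hi) _ _ fun σ => rfl

lemma finrank_ker_boundary_skeleton (K : SComplex V) {d i : ℕ} (hi : i ≤ d) :
    Module.finrank (ZMod 2) (LinearMap.ker ((K.skeleton d).boundary i)) =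
      Module.finrank (ZMod 2) (LinearMap.ker (K.boundary i)) := by
  let E := LinearEquiv.funCongrLeft (ZMod 2) (ZMod 2) (K.skeletonFacesEquiv hi)
  let E' := LinearEquiv.funCongrLeft (ZMod 2) (ZMod 2)
    (K.skeletonFacesEquiv (i.sub_le 1 |>.trans hi))
  have hcomm : ((K.skeleton d).boundary i).comp E.toLinearMap =
      E'.toLinearMap.comp (K.boundary i) :=
    LinearMap.ext (K.boundary_skeleton_comp hi)
  have hker : LinearMap.ker (K.boundary i) =
      (LinearMap.ker ((K.skeleton d).boundary i)).comap E.toLinearMap := by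
    rw [← LinearMap.ker_comp, hcomm, LinearEquiv.ker_comp]
  rw [hker, Submodule.comap_equiv_eq_map_symm, LinearEquiv.finrank_map_eq]

end SComplex

open SComplex

/-- Proposition 9. -/
theorem prop9 {V : Type} [DecidableEq V] [Fintype V]
    (K : SComplex V) (hdim : K.IsDim 2) (hβ : K.betti 2 = 0)
    (hcb : (K.skeleton 1).HasCompleteBasis 1 2) :
    (3 : ℤ) * (K.fnum 2 : ℤ) ≤ 2 * (K.fnum 1 : ℤ) - 3 ∧
      (K.fnum 2 : ℤ) ≤ 2 * (K.fnum 0 : ℤ) - 5 := by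
  obtain ⟨ι, _, b, hb⟩ := hcb
  have hz := Module.finrank_eq_card_basis b
  have hf₂ : K.fnum 2 ≤ Fintype.card ι := by
    rw [← hz, K.finrank_ker_boundary_skeleton le_rfl]
    exact fnum_le_finrank_ker_boundary (i := 0) (ker_boundary_eq_bot hdim hβ)
  have : Nonempty ι := Fintype.card_pos_iff.mp ((fnum_pos hdim).trans_le hf₂)
  have hcycles :=
    mul_card_add_le_two_mul_card_of_two_complete b hb (g := 3) fun _ => three_le_card_support
  have hrank := (K.skeleton 1).fnum_one_lt_finrank_ker_add
  rw [Fintype.card_coe, ← fnum, fnum_skeleton K le_rfl] at hcycles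
  rw [hz, fnum_skeleton K le_rfl, fnum_skeleton K zero_le_one] at hrank
  omega
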